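/- Let K be a compact convex set in ℝⁿ with nonempty interior, and suppose there is a direct sum decomposition ℝⁿ = ξ ⊕ ξ′ into nonzero subspaces such that every outer unit normal at a regular boundary point of K lies either in ξ or in ξ′. Then there exists a direct sum decomposition ℝⁿ = η ⊕ η′ with dim η = dim ξ and dim η′ = dim ξ′, and compact convex sets K₁ ⊆ η and K₂ ⊆ η′, such that K = K₁ + K₂ (Minkowski sum). -/

import Mathlib

/-!
Centre the polar body `K° = {u | ∀ y ∈ K, ⟪y - c, u⟫ ≤ 1}` at an interior point `c` of `K`.
A nonzero exposed point `p` of `K°`, exposed by `w`, is a positive multiple of the unique outer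
normal of `K` at the boundary point `c + ⟪w, p⟫⁻¹ • w`, so every exposed point of `K°` lies in
`ξ ∪ ξ'`. The compact set `K°` is therefore contained in the convex join of `K° ∩ ξ` and
`K° ∩ ξ'`, which makes the support function of `K` additive across `ξ ⊕ ξ'`. By separation, `K`
is then the sum of its projections onto `ξ'ᗮ` along `ξᗮ` and onto `ξᗮ` along `ξ'ᗮ`.
-/

open scoped Pointwise RealInnerProductSpace
noncomputable section

/-- Abbreviation for n-dimensional Euclidean space. -/
abbrev Euc (n : ℕ) := EuclideanSpace ℝ (Fin n)

/-- The translate K + v of a set K by a vector v. -/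
def transl {n : ℕ} (K : Set (Euc n)) (v : Euc n) : Set (Euc n) := (fun x => x + v) '' K

/-- Orthogonal projection of a set onto a subspace ξ, viewed inside the ambient space. -/
def projSet {n : ℕ} (ξ : Submodule ℝ (Euc n)) (K : Set (Euc n)) : Set (Euc n) :=
  (fun x => (Submodule.orthogonalProjectionOnto ξ x : Euc n)) '' K

/-- A simplicial family of size m+1: distinct unit vectors spanning an m-dimensional
subspace, some positive combination of which vanishes (the outer unit normals of an
m-dimensional simplex). -/
def SimplicialFamily {n : ℕ} (m : ℕ) (u : Fin (m + 1) → Euc n) : Prop :=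
  Function.Injective u ∧ (∀ i, ‖u i‖ = 1) ∧
    Module.finrank ℝ (Submodule.span ℝ (Set.range u)) = m ∧
    ∃ c : Fin (m + 1) → ℝ, (∀ i, 0 < c i) ∧ ∑ i, c i • u i = 0

/-- L is d-reliable: whenever every projection of L onto a d-dimensional subspace contains
a translate of the corresponding projection of a compact convex set K, L contains a
translate of K. -/
def DReliable {n : ℕ} (d : ℕ) (L : Set (Euc n)) : Prop :=
  ∀ K : Set (Euc n), IsCompact K → Convex ℝ K → K.Nonempty →
    (∀ ξ : Submodule ℝ (Euc n), Module.finrank ℝ ξ = d →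
      ∃ w, transl (projSet ξ K) w ⊆ projSet ξ L) →
    ∃ v, transl K v ⊆ L

/-- x is a regular boundary point of L: exactly one outer unit normal at x. -/
def IsRegularPoint {n : ℕ} (L : Set (Euc n)) (x : Euc n) : Prop :=
  x ∈ frontier L ∧ ∃! u : Euc n, ‖u‖ = 1 ∧ ∀ y ∈ L, ⟪y - x, u⟫ ≤ 0

/-- u is the (unique) outer unit normal to L at the regular boundary point x. -/
def IsNormalAtRegularPoint {n : ℕ} (L : Set (Euc n)) (x u : Euc n) : Prop :=
  x ∈ frontier L ∧ ‖u‖ = 1 ∧ (∀ y ∈ L, ⟪y - x, u⟫ ≤ 0) ∧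
    ∀ w : Euc n, ‖w‖ = 1 → (∀ y ∈ L, ⟪y - x, w⟫ ≤ 0) → w = u

/-- The support set of P in direction u. -/
def supportSet {n : ℕ} (P : Set (Euc n)) (u : Euc n) : Set (Euc n) :=
  {x ∈ P | ∀ y ∈ P, ⟪y, u⟫ ≤ ⟪x, u⟫}

/-- u is an outer unit facet normal of P: the support set of P in direction u is a face of
codimension 1 in the affine hull of P. -/
def IsFacetNormal {n : ℕ} (P : Set (Euc n)) (u : Euc n) : Prop :=
  ‖u‖ = 1 ∧ Module.finrank ℝ (vectorSpan ℝ (supportSet P u)) + 1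
      = Module.finrank ℝ (vectorSpan ℝ P)

/-- S is a k-dimensional simplex: the convex hull of k+1 affinely independent points. -/
def IsSimplexOfDim {n : ℕ} (k : ℕ) (S : Set (Euc n)) : Prop :=
  ∃ p : Fin (k + 1) → Euc n, AffineIndependent ℝ p ∧ S = convexHull ℝ (Set.range p)

/-- C is d-decomposable: a direct Minkowski sum of at least two nonempty compact convex
sets lying in complementary subspaces of dimension at most d. -/
def DDecomposable {n : ℕ} (d : ℕ) (C : Set (Euc n)) : Prop :=
  ∃ (m : ℕ) (ξ : Fin m → Submodule ℝ (Euc n)) (Cs : Fin m → Set (Euc n)),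
    2 ≤ m ∧ iSupIndep ξ ∧ (⨆ i, ξ i) = ⊤ ∧
    (∀ i, Module.finrank ℝ (ξ i) ≤ d) ∧
    (∀ i, (Cs i).Nonempty ∧ IsCompact (Cs i) ∧ Convex ℝ (Cs i) ∧ Cs i ⊆ (ξ i : Set (Euc n))) ∧
    C = ∑ i, Cs i

/-- C is a d-decomposable orthogonal simplex product: a direct Minkowski sum of simplices of
dimension at most d lying in mutually orthogonal complementary subspaces of dimension at
most d. -/
def OrthSimplexProduct {n : ℕ} (d : ℕ) (C : Set (Euc n)) : Prop :=
  ∃ (m : ℕ) (ξ : Fin m → Submodule ℝ (Euc n)) (Cs : Fin m → Set (Euc n)),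
    2 ≤ m ∧ iSupIndep ξ ∧ (⨆ i, ξ i) = ⊤ ∧
    (∀ i, Module.finrank ℝ (ξ i) ≤ d) ∧
    (∀ i j, i ≠ j → ∀ x ∈ ξ i, ∀ y ∈ ξ j, ⟪x, y⟫ = 0) ∧
    (∀ i, Cs i ⊆ (ξ i : Set (Euc n)) ∧ ∃ k ≤ d, IsSimplexOfDim k (Cs i)) ∧
    C = ∑ i, Cs i

open Set Filter Topology

lemma Submodule.eq_and_eq_of_add_eq_add {R M : Type*} [Ring R] [AddCommGroup M] [Module R M]
    {p q : Submodule R M} (hpq : Disjoint p q) {a₁ b₁ a₂ b₂ : M} (ha₁ : a₁ ∈ p) (hb₁ : b₁ ∈ p)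
    (ha₂ : a₂ ∈ q) (hb₂ : b₂ ∈ q) (h : a₁ + a₂ = b₁ + b₂) : a₁ = b₁ ∧ a₂ = b₂ := by
  have hmem : a₁ - b₁ ∈ p ⊓ q :=
    ⟨p.sub_mem ha₁ hb₁, by
      rw [sub_eq_sub_iff_add_eq_add.mpr (h.trans (add_comm _ _))]; exact q.sub_mem hb₂ ha₂⟩
  rw [hpq.eq_bot, Submodule.mem_bot, sub_eq_zero] at hmem
  exact ⟨hmem, by rwa [hmem, add_right_inj] at h⟩

lemma IsCompact.convexJoin {F : Type*} [AddCommGroup F] [Module ℝ F] [TopologicalSpace F]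
    [ContinuousAdd F] [ContinuousSMul ℝ F] {s t : Set F} (hs : IsCompact s) (ht : IsCompact t) :
    IsCompact (_root_.convexJoin ℝ s t) := by
  have : _root_.convexJoin ℝ s t =
      (fun p : ℝ × F × F => (1 - p.1) • p.2.1 + p.1 • p.2.2) '' (Icc 0 1 ×ˢ s ×ˢ t) := by
    ext x
    simp only [mem_convexJoin, segment_eq_image, mem_image, mem_prod, Prod.exists]
    constructor
    · rintro ⟨a, ha, b, hb, θ, hθ, rfl⟩
      exact ⟨θ, a, b, ⟨hθ, ha, hb⟩, rfl⟩
    · rintro ⟨θ, a, b, ⟨hθ, ha, hb⟩, rfl⟩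
      exact ⟨a, ha, b, hb, θ, hθ, rfl⟩
  rw [this]
  exact (isCompact_Icc.prod (hs.prod ht)).image (by fun_prop)

section InnerProductSpace

variable {E : Type*} [NormedAddCommGroup E] [InnerProductSpace ℝ E]

lemma geometric_hahn_banach_closed_point_inner [CompleteSpace E] {s : Set E} (hs : Convex ℝ s)
    (hsc : IsClosed s) {z : E} (hz : z ∉ s) :
    ∃ v : E, ∃ b : ℝ, (∀ a ∈ s, ⟪a, v⟫ < b) ∧ b < ⟪z, v⟫ := by
  obtain ⟨f, b, hfs, hfz⟩ := geometric_hahn_banach_closed_point hs hsc hz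
  refine ⟨(InnerProductSpace.toDual ℝ E).symm f, b, fun a ha => ?_, ?_⟩
  · rw [real_inner_comm, InnerProductSpace.toDual_symm_apply]
    exact hfs a ha
  · rwa [real_inner_comm, InnerProductSpace.toDual_symm_apply]

lemma exists_inner_of_mem_exposedPoints [CompleteSpace E] {s : Set E} {p : E}
    (hp : p ∈ s.exposedPoints ℝ) :
    ∃ w : E, ∀ y ∈ s, ⟪w, y⟫ ≤ ⟪w, p⟫ ∧ (⟪w, p⟫ ≤ ⟪w, y⟫ → y = p) := by
  obtain ⟨-, l, hl⟩ := hp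
  refine ⟨(InnerProductSpace.toDual ℝ E).symm l, fun y hy => ?_⟩
  simpa only [InnerProductSpace.toDual_symm_apply] using hl y hy

/-- The exposing functional is `⟪f - z, ·⟫`. -/
lemma IsCompact.exists_mem_exposedPoints_forall_norm_sub_le {s : Set E} (hs : IsCompact s)
    (hne : s.Nonempty) (z : E) : ∃ f ∈ s.exposedPoints ℝ, ∀ y ∈ s, ‖y - z‖ ≤ ‖f - z‖ := by
  obtain ⟨f, hf, hmax⟩ :=
    hs.exists_isMaxOn hne (continuous_id.sub continuous_const).norm.continuousOn
  refine ⟨f, ⟨hf, innerSL ℝ (f - z), fun y hy => ?_⟩, fun y hy => hmax hy⟩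
  have hfar : ‖y - f‖ ^ 2 + 2 * ⟪y - f, f - z⟫ ≤ 0 := by
    have hle : ‖y - z‖ ^ 2 ≤ ‖f - z‖ ^ 2 := by gcongr; exact hmax hy
    rw [show y - z = (y - f) + (f - z) by abel, norm_add_sq_real] at hle
    linarith
  have hdiff : innerSL ℝ (f - z) y - innerSL ℝ (f - z) f = ⟪y - f, f - z⟫ := by
    rw [innerSL_apply_apply, innerSL_apply_apply, ← inner_sub_right, real_inner_comm]
  refine ⟨by nlinarith [sq_nonneg ‖y - f‖], fun hge => ?_⟩
  have : ‖y - f‖ ^ 2 ≤ 0 := by linarith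
  exact sub_eq_zero.mp (norm_eq_zero.mp (by nlinarith [norm_nonneg (y - f)]))

/-- Straszewicz-type covering: push a far-away centre `z` behind `q`; a farthest point of `s`
from `z` is exposed, hence in `M`, yet it is nearer to `z` than `q` is. -/
theorem IsCompact.subset_of_exposedPoints_subset [CompleteSpace E] {s M : Set E}
    (hs : IsCompact s) (hMc : IsClosed M) (hMv : Convex ℝ M) (hsM : s.exposedPoints ℝ ⊆ M) :
    s ⊆ M := by
  intro q hq
  by_contra hqM
  obtain ⟨v, b, hvM, hbq⟩ := geometric_hahn_banach_closed_point_inner hMv hMc hqM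
  obtain ⟨D, hD⟩ := hs.isBounded.subset_closedBall q
  set γ := ⟪q, v⟫ - b
  have hγ : 0 < γ := sub_pos.mpr hbq
  set t := (D ^ 2 + 1) / (2 * γ)
  have ht0 : 0 < t := by positivity
  have ht : 2 * t * γ = D ^ 2 + 1 := by simp only [t]; field_simp
  obtain ⟨f, hf, hfar⟩ := hs.exists_mem_exposedPoints_forall_norm_sub_le ⟨q, hq⟩ (q - t • v)
  have hfq : ‖f - q‖ ≤ D := by simpa [dist_eq_norm] using hD hf.1
  have hfv : ⟪f - q, v⟫ < -γ := by rw [inner_sub_left]; linarith [hvM f (hsM hf)]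
  have hlt : ‖f - (q - t • v)‖ ^ 2 < ‖q - (q - t • v)‖ ^ 2 := by
    rw [show f - (q - t • v) = (f - q) + t • v by abel, sub_sub_cancel, norm_add_sq_real,
      real_inner_smul_right]
    nlinarith [mul_lt_mul_of_pos_left hfv ht0, pow_le_pow_left₀ (norm_nonneg _) hfq 2]
  have hge := hfar q hq
  nlinarith [norm_nonneg (q - (q - t • v))]

lemma inner_sub_neg_of_mem_interior {K : Set E} {c x v : E} (hc : c ∈ interior K) (hv : v ≠ 0)
    (hx : ∀ y ∈ K, ⟪y - x, v⟫ ≤ 0) : ⟪c - x, v⟫ < 0 := by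
  have hline : Tendsto (fun t : ℝ => c + t • v) (𝓝 0) (𝓝 c) := by
    simpa using ((continuous_id.smul continuous_const).const_add c).tendsto (0 : ℝ)
  have hK : ∀ᶠ t in 𝓝[>] (0 : ℝ), c + t • v ∈ K :=
    nhdsWithin_le_nhds (hline (mem_interior_iff_mem_nhds.mp hc))
  obtain ⟨t, htK, ht⟩ := (hK.and self_mem_nhdsWithin).exists
  have := hx _ htK
  rw [show c + t • v - x = (c - x) + t • v by abel, inner_add_left, real_inner_smul_left,
    real_inner_self_eq_norm_sq] at this
  have : 0 < t * ‖v‖ ^ 2 := mul_pos ht (by positivity)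
  linarith

def polarAt (K : Set E) (c : E) : Set E := {u | ∀ y ∈ K, ⟪y - c, u⟫ ≤ 1}

lemma zero_mem_polarAt (K : Set E) (c : E) : (0 : E) ∈ polarAt K c := fun y _ => by simp

lemma convex_polarAt (K : Set E) (c : E) : Convex ℝ (polarAt K c) := by
  simp only [polarAt, ofPred_forall]
  exact convex_iInter₂ fun y _ => convex_halfSpace_le (innerₛₗ ℝ (y - c)).isLinear 1

lemma isClosed_polarAt (K : Set E) (c : E) : IsClosed (polarAt K c) := by
  simp only [polarAt, ofPred_forall]
  exact isClosed_biInter fun y _ => isClosed_le (continuous_const.inner continuous_id)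
    continuous_const

lemma polarAt_subset_closedBall {K : Set E} {c : E} {r : ℝ} (hr : 0 < r)
    (hK : Metric.closedBall c r ⊆ K) : polarAt K c ⊆ Metric.closedBall 0 r⁻¹ := by
  intro u hu
  rw [mem_closedBall_zero_iff]
  rcases eq_or_ne u 0 with rfl | hu0
  · simp [hr.le]
  have hu0' : 0 < ‖u‖ := norm_pos_iff.mpr hu0
  have hy : c + (r / ‖u‖) • u ∈ K := hK (by
    rw [Metric.mem_closedBall, dist_eq_norm, add_sub_cancel_left, norm_smul,
      Real.norm_of_nonneg (by positivity), div_mul_cancel₀ _ hu0'.ne'])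
  have hru : r * ‖u‖ ≤ 1 := by
    convert hu _ hy using 1
    rw [add_sub_cancel_left, real_inner_smul_left, real_inner_self_eq_norm_sq]
    field_simp
  rwa [le_inv_comm₀ hu0' hr, inv_eq_one_div, le_div_iff₀ hu0']

lemma mem_of_forall_mem_polarAt [CompleteSpace E] {K : Set E} {c z : E} (hKv : Convex ℝ K)
    (hKc : IsClosed K) (hc : c ∈ K) (hz : ∀ u ∈ polarAt K c, ⟪z - c, u⟫ ≤ 1) : z ∈ K := by
  by_contra hzK
  obtain ⟨v, b, hvK, hbz⟩ := geometric_hahn_banach_closed_point_inner hKv hKc hzK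
  set μ := (b + ⟪z, v⟫) / 2 - ⟪c, v⟫ with hμ_def
  have hμ : 0 < μ := by linarith [hvK c hc, hμ_def]
  have hu : μ⁻¹ • v ∈ polarAt K c := fun y hy => by
    rw [real_inner_smul_right, inv_mul_le_one₀ hμ, inner_sub_left]
    linarith [hvK y hy, hμ_def]
  have := hz _ hu
  rw [real_inner_smul_right, inv_mul_le_one₀ hμ, inner_sub_left] at this
  linarith [hμ_def]

lemma inv_inner_smul_mem_polarAt {K : Set E} {c x v : E} (hv : ∀ y ∈ K, ⟪y - x, v⟫ ≤ 0)
    (hβ : 0 < ⟪x - c, v⟫) : ⟪x - c, v⟫⁻¹ • v ∈ polarAt K c := fun y hy => by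
  rw [real_inner_smul_right, inv_mul_le_one₀ hβ, inner_sub_left, inner_sub_left]
  have := hv y hy
  rw [inner_sub_left] at this
  linarith

/-- In terms of the support function `h_K`: `h_K v₁ + h_K v₂ ≤ h_K (v₁ + v₂)` for `v₁ ∈ ξ`,
`v₂ ∈ ξ'`. -/
def SupportSuperadditive (K : Set E) (ξ ξ' : Submodule ℝ E) : Prop :=
  ∀ v₁ ∈ ξ, ∀ v₂ ∈ ξ', ∀ x ∈ K, ∀ y ∈ K, ∃ z ∈ K, ⟪x, v₁⟫ + ⟪y, v₂⟫ ≤ ⟪z, v₁ + v₂⟫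

/-- Rescaling `v₁ + v₂` onto the boundary of the polar body and splitting it there along the
convex join bounds `h_K v₁` and `h_K v₂` by the two parts of `h_K (v₁ + v₂)`. -/
lemma supportSuperadditive_of_polarAt_subset_convexJoin {K : Set E} {c : E}
    (hKc : IsCompact K) (hc : c ∈ interior K) {ξ ξ' : Submodule ℝ E} (hξξ' : Disjoint ξ ξ')
    (hP : polarAt K c ⊆ convexJoin ℝ (ξ ∩ polarAt K c) (ξ' ∩ polarAt K c)) :
    SupportSuperadditive K ξ ξ' := by
  intro v₁ hv₁ v₂ hv₂ x hx y hy
  obtain ⟨z, hz, hzmax⟩ := hKc.exists_isMaxOn ⟨x, hx⟩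
    (by fun_prop : Continuous fun w : E => ⟪w, v₁ + v₂⟫).continuousOn
  refine ⟨z, hz, ?_⟩
  rcases eq_or_ne (v₁ + v₂) 0 with h0 | h0
  · obtain ⟨rfl, rfl⟩ := Submodule.eq_and_eq_of_add_eq_add hξξ' hv₁ ξ.zero_mem hv₂ ξ'.zero_mem
      (h0.trans (add_zero 0).symm)
    simp
  have hzK : ∀ w ∈ K, ⟪w - z, v₁ + v₂⟫ ≤ 0 := fun w hw => by
    rw [inner_sub_left, sub_nonpos]; exact hzmax hw
  set m := ⟪z - c, v₁ + v₂⟫ with hm_def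
  have hm : 0 < m := by
    have := inner_sub_neg_of_mem_interior hc h0 hzK
    rwa [← neg_sub, inner_neg_left, neg_lt_zero] at this
  have hmP : m⁻¹ • (v₁ + v₂) ∈ polarAt K c := inv_inner_smul_mem_polarAt hzK hm
  obtain ⟨a, ⟨ha, haP⟩, b, ⟨hb, hbP⟩, s, t, hs, ht, hst, hab⟩ := mem_convexJoin.mp (hP hmP)
  obtain ⟨hv₁a, hv₂b⟩ : v₁ = (m * s) • a ∧ v₂ = (m * t) • b := by
    refine Submodule.eq_and_eq_of_add_eq_add hξξ' hv₁ (ξ.smul_mem _ ha) hv₂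
      (ξ'.smul_mem _ hb) ?_
    rw [mul_smul, mul_smul, ← smul_add, hab, smul_smul, mul_inv_cancel₀ hm.ne', one_smul]
  have hx₁ : ⟪x - c, v₁⟫ ≤ m * s := by
    rw [hv₁a, real_inner_smul_right]
    exact mul_le_of_le_one_right (by positivity) (haP x hx)
  have hy₂ : ⟪y - c, v₂⟫ ≤ m * t := by
    rw [hv₂b, real_inner_smul_right]
    exact mul_le_of_le_one_right (by positivity) (hbP y hy)
  have hmst : m * s + m * t = m := by rw [← mul_add, hst, mul_one]
  have hm_eq : m = ⟪z, v₁ + v₂⟫ - ⟪c, v₁⟫ - ⟪c, v₂⟫ := by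
    rw [hm_def, inner_sub_left, inner_add_right c]; ring
  rw [inner_sub_left] at hx₁ hy₂
  linarith

lemma Submodule.inner_projection_add {p q : Submodule ℝ E} (hpq : IsCompl p q) (x : E)
    {v₁ v₂ : E} (hv₁ : v₁ ∈ qᗮ) (hv₂ : v₂ ∈ pᗮ) : ⟪p.projection q hpq x, v₁ + v₂⟫ = ⟪x, v₁⟫ := by
  have hq : ⟪x - p.projection q hpq x, v₁⟫ = 0 :=
    Submodule.inner_right_of_mem_orthogonal (Submodule.sub_projection_mem hpq x) hv₁
  rw [inner_add_right, Submodule.inner_right_of_mem_orthogonal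
    (Submodule.projection_apply_mem hpq x) hv₂, add_zero]
  rw [inner_sub_left] at hq
  linarith

variable [FiniteDimensional ℝ E]

lemma isCompact_polarAt {K : Set E} {c : E} (hc : c ∈ interior K) :
    IsCompact (polarAt K c) := by
  obtain ⟨r, hr, hK⟩ := Metric.nhds_basis_closedBall.mem_iff.mp (mem_interior_iff_mem_nhds.mp hc)
  exact (isCompact_closedBall 0 r⁻¹).of_isClosed_subset (isClosed_polarAt K c)
    (polarAt_subset_closedBall hr hK)

lemma polarAt_subset_convexJoin {K : Set E} {c : E} (hc : c ∈ interior K)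
    {ξ ξ' : Submodule ℝ E} (hexp : (polarAt K c).exposedPoints ℝ ⊆ ξ ∪ ξ') :
    polarAt K c ⊆ convexJoin ℝ (ξ ∩ polarAt K c) (ξ' ∩ polarAt K c) := by
  have hP := isCompact_polarAt hc
  have hM := (hP.inter_left ξ.closed_of_finiteDimensional).convexJoin
    (hP.inter_left ξ'.closed_of_finiteDimensional)
  refine hP.subset_of_exposedPoints_subset hM.isClosed
    ((ξ.convex.inter (convex_polarAt K c)).convexJoin (ξ'.convex.inter (convex_polarAt K c)))
    fun p hp => ?_
  have h0 (η : Submodule ℝ E) : (0 : E) ∈ (η : Set E) ∩ polarAt K c :=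
    ⟨η.zero_mem, zero_mem_polarAt K c⟩
  rcases hexp hp with hξ | hξ'
  · exact subset_convexJoin_left ⟨0, h0 ξ'⟩ ⟨hξ, hp.1⟩
  · exact subset_convexJoin_right ⟨0, h0 ξ⟩ ⟨hξ', hp.1⟩

lemma Submodule.isCompl_orthogonal_of_isCompl {ξ ξ' : Submodule ℝ E} (h : IsCompl ξ ξ') :
    IsCompl ξ'ᗮ ξᗮ := by
  refine ⟨disjoint_iff.mpr ?_, codisjoint_iff.mpr ?_⟩
  · rw [Submodule.inf_orthogonal, sup_comm, h.sup_eq_top, Submodule.top_orthogonal_eq_bot]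
  · rw [← Submodule.orthogonal_eq_bot_iff, ← Submodule.inf_orthogonal,
      Submodule.orthogonal_orthogonal, Submodule.orthogonal_orthogonal, inf_comm, h.inf_eq_bot]

lemma Submodule.finrank_orthogonal_of_isCompl {ξ ξ' : Submodule ℝ E} (h : IsCompl ξ ξ') :
    Module.finrank ℝ ξ'ᗮ = Module.finrank ℝ ξ := by
  have := ξ'.finrank_add_finrank_orthogonal
  have := Submodule.finrank_add_eq_of_isCompl h
  omega

/-- Separate a point `pr₁ x + pr₂ y` outside `K` by `v = v₁ + v₂`; the superadditivity puts it
back under the separating hyperplane. -/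
theorem SupportSuperadditive.eq_image_projection_add {K : Set E} {ξ ξ' : Submodule ℝ E}
    (hK : SupportSuperadditive K ξ ξ') (hKc : IsClosed K) (hKv : Convex ℝ K)
    (h : IsCompl ξ ξ') :
    K = ξ'ᗮ.projection ξᗮ (Submodule.isCompl_orthogonal_of_isCompl h) '' K +
      ξᗮ.projection ξ'ᗮ (Submodule.isCompl_orthogonal_of_isCompl h).symm '' K := by
  have h' := Submodule.isCompl_orthogonal_of_isCompl h
  refine Subset.antisymm (fun x hx => ⟨_, mem_image_of_mem _ hx, _, mem_image_of_mem _ hx,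
    Submodule.projection_add_projection_eq_self h' x⟩) ?_
  rintro _ ⟨_, ⟨x, hx, rfl⟩, _, ⟨y, hy, rfl⟩, rfl⟩
  by_contra hxy
  obtain ⟨v, b, hvK, hbv⟩ := geometric_hahn_banach_closed_point_inner hKv hKc hxy
  obtain ⟨v₁, hv₁, v₂, hv₂, rfl⟩ := Submodule.mem_sup.mp (h.sup_eq_top ▸ Submodule.mem_top :
    v ∈ ξ ⊔ ξ')
  obtain ⟨z, hz, hle⟩ := hK v₁ hv₁ v₂ hv₂ x hx y hy
  rw [inner_add_left, Submodule.inner_projection_add h' x (ξ.le_orthogonal_orthogonal hv₁)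
    (ξ'.le_orthogonal_orthogonal hv₂), add_comm v₁ v₂, Submodule.inner_projection_add h'.symm y
    (ξ'.le_orthogonal_orthogonal hv₂) (ξ.le_orthogonal_orthogonal hv₁)] at hbv
  linarith [hvK z hz]

end InnerProductSpace

lemma exists_isNormalAtRegularPoint_of_mem_exposedPoints_polarAt {n : ℕ} {K : Set (Euc n)}
    {c p : Euc n} (hKc : IsCompact K) (hKv : Convex ℝ K) (hc : c ∈ interior K)
    (hp : p ∈ (polarAt K c).exposedPoints ℝ) (hp0 : p ≠ 0) :
    ∃ x, IsNormalAtRegularPoint K x (‖p‖⁻¹ • p) := by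
  obtain ⟨w, hw⟩ := exists_inner_of_mem_exposedPoints hp
  set α := ⟪w, p⟫
  have hα : 0 < α := by
    by_contra! hα
    exact hp0 ((hw 0 (zero_mem_polarAt K c)).2 (by simpa using hα)).symm
  set x := c + α⁻¹ • w
  have hxc (u : Euc n) : ⟪x - c, u⟫ = α⁻¹ * ⟪w, u⟫ := by
    rw [add_sub_cancel_left, real_inner_smul_left]
  have hxK : x ∈ K := mem_of_forall_mem_polarAt hKv hKc.isClosed (interior_subset hc)
    fun u hu => by rw [hxc, inv_mul_le_one₀ hα]; exact (hw u hu).1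
  have hpx : ∀ y ∈ K, ⟪y - x, p⟫ ≤ 0 := fun y hy => by
    have hxp : ⟪x - c, p⟫ = 1 := by rw [hxc, inv_mul_cancel₀ hα.ne']
    rw [show y - x = (y - c) - (x - c) by abel, inner_sub_left]
    linarith [hp.1 y hy]
  refine ⟨x, ?_, norm_smul_inv_norm hp0, fun y hy => ?_, fun v hv hvK => ?_⟩
  · rw [hKc.isClosed.frontier_eq]
    exact ⟨hxK, fun hx => (inner_sub_neg_of_mem_interior hx hp0 hpx).ne (by simp)⟩
  · rw [real_inner_smul_right]
    exact mul_nonpos_of_nonneg_of_nonpos (by positivity) (hpx y hy)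
  have hβ : 0 < ⟪x - c, v⟫ := by
    have := inner_sub_neg_of_mem_interior hc (by rintro rfl; simp at hv) hvK
    rwa [← neg_sub, inner_neg_left, neg_lt_zero] at this
  have hvp : ⟪x - c, v⟫⁻¹ • v = p := by
    refine (hw _ (inv_inner_smul_mem_polarAt hvK hβ)).2 (le_of_eq ?_)
    have hwv : ⟪w, v⟫ ≠ 0 := by rw [hxc] at hβ; exact (pos_of_mul_pos_right hβ (by positivity)).ne'
    rw [real_inner_smul_right, hxc, mul_inv, inv_inv, mul_assoc, inv_mul_cancel₀ hwv, mul_one]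
  have hvβ : v = ⟪x - c, v⟫ • p := by rw [← hvp, smul_inv_smul₀ hβ.ne']
  have hβp : ⟪x - c, v⟫ = ‖p‖⁻¹ := by
    rw [hvβ, norm_smul, Real.norm_of_nonneg hβ.le] at hv
    exact eq_inv_of_mul_eq_one_left hv
  rw [hvβ, hβp]

lemma exposedPoints_polarAt_subset_union {n : ℕ} {K : Set (Euc n)} {c : Euc n}
    (hKc : IsCompact K) (hKv : Convex ℝ K) (hc : c ∈ interior K) {ξ ξ' : Submodule ℝ (Euc n)}
    (hnormals : ∀ x u : Euc n, IsNormalAtRegularPoint K x u → u ∈ ξ ∨ u ∈ ξ') :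
    (polarAt K c).exposedPoints ℝ ⊆ ξ ∪ ξ' := by
  intro p hp
  rcases eq_or_ne p 0 with rfl | hp0
  · exact Or.inl ξ.zero_mem
  obtain ⟨x, hx⟩ := exists_isNormalAtRegularPoint_of_mem_exposedPoints_polarAt hKc hKv hc hp hp0
  rw [← smul_inv_smul₀ (norm_ne_zero_iff.mpr hp0) p]
  exact (hnormals x _ hx).imp (ξ.smul_mem _) (ξ'.smul_mem _)

theorem body_splits_along_regular_normals_general {n : ℕ} (K : Set (Euc n))
    (hKc : IsCompact K) (hKv : Convex ℝ K) (hint : (interior K).Nonempty)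
    (ξ ξ' : Submodule ℝ (Euc n))
    (hdisj : ξ ⊓ ξ' = ⊥) (hspan : ξ ⊔ ξ' = ⊤)
    (hnormals : ∀ x u : Euc n, IsNormalAtRegularPoint K x u → u ∈ ξ ∨ u ∈ ξ') :
    ∃ η η' : Submodule ℝ (Euc n),
      Module.finrank ℝ η = Module.finrank ℝ ξ ∧
      Module.finrank ℝ η' = Module.finrank ℝ ξ' ∧
      η ⊓ η' = ⊥ ∧ η ⊔ η' = ⊤ ∧
      ∃ K₁ K₂ : Set (Euc n),
        IsCompact K₁ ∧ Convex ℝ K₁ ∧ K₁ ⊆ (η : Set (Euc n)) ∧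
        IsCompact K₂ ∧ Convex ℝ K₂ ∧ K₂ ⊆ (η' : Set (Euc n)) ∧
        K = K₁ + K₂ := by
  obtain ⟨c, hc⟩ := hint
  have h : IsCompl ξ ξ' := ⟨disjoint_iff.mpr hdisj, codisjoint_iff.mpr hspan⟩
  have h' := Submodule.isCompl_orthogonal_of_isCompl h
  have hK : SupportSuperadditive K ξ ξ' :=
    supportSuperadditive_of_polarAt_subset_convexJoin hKc hc h.disjoint
      (polarAt_subset_convexJoin hc (exposedPoints_polarAt_subset_union hKc hKv hc hnormals))
  refine ⟨ξ'ᗮ, ξᗮ, Submodule.finrank_orthogonal_of_isCompl h,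
    Submodule.finrank_orthogonal_of_isCompl h.symm, h'.inf_eq_bot, h'.sup_eq_top, _, _,
    hKc.image (LinearMap.continuous_of_finiteDimensional _), hKv.linear_image _,
    image_subset_iff.mpr fun x _ => Submodule.projection_apply_mem h' x,
    hKc.image (LinearMap.continuous_of_finiteDimensional _), hKv.linear_image _,
    image_subset_iff.mpr fun x _ => Submodule.projection_apply_mem h'.symm x,
    hK.eq_image_projection_add hKc.isClosed hKv h⟩

/-- If every outer unit normal at a regular boundary point of a full-dimensional compact
convex set K lies in one of two complementary subspaces ξ, ξ′, then K decomposes as a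
direct Minkowski sum K₁ + K₂ with respect to some direct sum decomposition ℝⁿ = η ⊕ η′
with dim η = dim ξ and dim η′ = dim ξ′. -/
theorem body_splits_along_regular_normals {n : ℕ} (K : Set (Euc n))
    (hKc : IsCompact K) (hKv : Convex ℝ K) (hint : (interior K).Nonempty)
    (ξ ξ' : Submodule ℝ (Euc n)) (hξ : ξ ≠ ⊥) (hξ' : ξ' ≠ ⊥)
    (hdisj : ξ ⊓ ξ' = ⊥) (hspan : ξ ⊔ ξ' = ⊤)
    (hnormals : ∀ x u : Euc n, IsNormalAtRegularPoint K x u → u ∈ ξ ∨ u ∈ ξ') :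
    ∃ η η' : Submodule ℝ (Euc n),
      Module.finrank ℝ η = Module.finrank ℝ ξ ∧
      Module.finrank ℝ η' = Module.finrank ℝ ξ' ∧
      η ⊓ η' = ⊥ ∧ η ⊔ η' = ⊤ ∧
      ∃ K₁ K₂ : Set (Euc n),
        IsCompact K₁ ∧ Convex ℝ K₁ ∧ K₁ ⊆ (η : Set (Euc n)) ∧
        IsCompact K₂ ∧ Convex ℝ K₂ ∧ K₂ ⊆ (η' : Set (Euc n)) ∧
        K = K₁ + K₂ :=
  body_splits_along_regular_normals_general K hKc hKv hint ξ ξ' hdisj hspan hnormals
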